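/- arXiv:1504.05395 — 3 statements merged into one kernel-verified Lean document; each statement's English description precedes it below -/
import Mathlib

section
/- Fix b, b' ∈ ℂ with b² ≠ 1, b'² ≠ 1, c ∈ ℂ* and b'^{-1} c^{-1} b = 1. Let R = [[b^{-1},0],[0,b]] and R' = [[b'^{-1},0],[0,b']]. For y ∈ ℂ let A(y) = [[c,0],[y,c^{-1}]] and u(y) = −b^{-1} y / (b'^{-1} − b'), U(y) = [[1,0],[u(y),1]]. Then U(y) · A(y) · R · U(y)^{-1} = R'. -/
open Matrix

/-- The key matrix identity of Theorem `abelian`: with b' = c⁻¹b, R = diag(b⁻¹,b),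
R' = diag(b'⁻¹,b'), A(y) = [[c,0],[y,c⁻¹]], u(y) = −b⁻¹y/(b'⁻¹ − b') and
U(y) = [[1,0],[u(y),1]], one has U(y)·A(y)·R·U(y)⁻¹ = R'. -/
theorem unstable_conjugation_identity (b b' c y : ℂ)
    (hb : b ≠ 0) (hb' : b' ≠ 0) (hc : c ≠ 0)
    (hb2 : b ^ 2 ≠ 1) (hb'2 : b' ^ 2 ≠ 1)
    (hrel : b'⁻¹ * c⁻¹ * b = 1) :
    let R : Matrix (Fin 2) (Fin 2) ℂ := !![b⁻¹, 0; 0, b]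
    let R' : Matrix (Fin 2) (Fin 2) ℂ := !![b'⁻¹, 0; 0, b']
    let A : Matrix (Fin 2) (Fin 2) ℂ := !![c, 0; y, c⁻¹]
    let u : ℂ := -b⁻¹ * y / (b'⁻¹ - b')
    let U : Matrix (Fin 2) (Fin 2) ℂ := !![1, 0; u, 1]
    U * A * R * U⁻¹ = R' := by
  intro R R' A u U
  have hden : b'⁻¹ - b' ≠ 0 := by
    intro h
    apply hb'2
    have h1 : b'⁻¹ = b' := by linear_combination h
    have h2 : b' * b'⁻¹ = 1 := mul_inv_cancel₀ hb'
    rw [h1] at h2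
    linear_combination h2
  have hb'eq : b' = c⁻¹ * b := by
    field_simp at hrel ⊢
    linear_combination -hrel
  have hb'i : b'⁻¹ = c * b⁻¹ := by
    rw [hb'eq, _root_.mul_inv_rev, inv_inv]; ring
  have hu : u * (b'⁻¹ - b') = -b⁻¹ * y := div_mul_cancel₀ _ hden
  have hUinv : U⁻¹ = !![1, 0; -u, 1] := by
    apply inv_eq_right_inv
    show (!![1, 0; u, 1] : Matrix (Fin 2) (Fin 2) ℂ) * !![1, 0; -u, 1] = 1
    rw [Matrix.mul_fin_two, Matrix.one_fin_two]
    norm_num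
  rw [hUinv]
  show !![1, 0; u, 1] * !![c, 0; y, c⁻¹] * !![b⁻¹, 0; 0, b] * !![1, 0; -u, 1] = !![b'⁻¹, 0; 0, b']
  rw [Matrix.mul_fin_two, Matrix.mul_fin_two, Matrix.mul_fin_two]
  ext i j
  fin_cases i <;> fin_cases j <;>
    simp only [Matrix.of_apply, Fin.zero_eta, Fin.mk_one, Matrix.cons_val', Matrix.cons_val_zero,
      Matrix.cons_val_one, Matrix.head_cons, Matrix.head_fin_const, Matrix.cons_val_fin_one,
      Matrix.empty_val']
  · linear_combination -hb'i
  · ring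
  · linear_combination hu - u * hb'i + u * hb'eq
  · linear_combination -hb'eq
end

section
/- Fix b, b' ∈ ℂ with b² ≠ 1, b'² ≠ 1, c ∈ ℂ* with b' = c^{-1}b, and matrices R = diag(b^{-1}, b), R' = diag(b'^{-1}, b'). Then the map sending (y, (A'₁,…,A'_{n})) with A'₁⋯A'_n R' = 1 to (A₁,…,A_{n}, A_{n+1}) where A_j = U(y)^{-1} A'_j U(y) (with U(y) as above) and A_{n+1} = [[c,0],[y,c^{-1}]], is a bijection onto the set of tuples (A₁,…,A_{n+1}) with A₁⋯A_{n+1} R = 1 and A_{n+1} lower-triangular with diagonal (c, c^{-1}). -/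
open Matrix

lemma prod_conj_aux {n : ℕ} (V W : Matrix (Fin 2) (Fin 2) ℂ)
    (h1 : W * V = 1) (h2 : V * W = 1) (f : Fin n → Matrix (Fin 2) (Fin 2) ℂ) :
    (List.ofFn (fun j => W * f j * V)).prod = W * (List.ofFn f).prod * V := by
  induction n with
  | zero => simp [h1]
  | succ m ih =>
    rw [List.ofFn_succ, List.ofFn_succ, List.prod_cons, List.prod_cons]
    have hih := ih (fun j => f j.succ)
    rw [hih]
    set P := (List.ofFn fun j => f j.succ).prod
    calc W * f 0 * V * (W * P * V) = W * f 0 * (V * W) * P * V := by noncomm_ring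
      _ = W * (f 0 * P) * V := by rw [h2]; noncomm_ring

lemma key_identity (b b' c : ℂ) (hb : b ≠ 0) (hb' : b' ≠ 0) (hc : c ≠ 0)
    (hd : b'⁻¹ - b' ≠ 0) (hrel : b' = c⁻¹ * b) (y : ℂ) :
    !![1, 0; b⁻¹ * y / (b'⁻¹ - b'), 1] * !![b', 0; 0, b'⁻¹] *
      !![1, 0; -b⁻¹ * y / (b'⁻¹ - b'), 1] * !![c, 0; y, c⁻¹] * !![b⁻¹, 0; 0, b] = 1 := by
  subst hrel
  have hcb : c^2 - b^2 ≠ 0 := by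
    intro h
    apply hd
    have hbc : (c⁻¹*b)⁻¹ - c⁻¹*b = (c^2 - b^2) / (b*c) := by field_simp
    rw [hbc, h, zero_div]
  ext i j
  fin_cases i <;> fin_cases j
  · simp [Matrix.mul_apply, Fin.sum_univ_two]
    field_simp
  · simp [Matrix.mul_apply, Fin.sum_univ_two]
  · simp [Matrix.mul_apply, Fin.sum_univ_two]
    left
    have hcb' : c*c - b*b ≠ 0 := by
      rw [show c*c - b*b = c^2 - b^2 from by ring]; exact hcb
    field_simp [hcb']
    ring
  · simp [Matrix.mul_apply, Fin.sum_univ_two]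
    field_simp

/-- The isomorphism Rep(C₁,…,Cᵢ; R)ᵘ ≅ 𝔸¹ × Rep(C₁,…,C_{i−1}; R'): with
b' = c⁻¹b, R = diag(b⁻¹,b), R' = diag(b'⁻¹,b'), the map sending
(y, (A'₁,…,A'ₙ)) with A'₁⋯A'ₙR' = 1 to (U(y)⁻¹A'₁U(y),…,U(y)⁻¹A'ₙU(y), [[c,0],[y,c⁻¹]])
is a bijection onto the tuples (A₁,…,A_{n+1}) with A₁⋯A_{n+1}R = 1 and A_{n+1}
lower triangular with diagonal (c, c⁻¹). -/
theorem unstable_splitting_bijection (n : ℕ) (b b' c : ℂ)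
    (hb : b ≠ 0) (hb' : b' ≠ 0) (hc : c ≠ 0)
    (hb2 : b ^ 2 ≠ 1) (hb'2 : b' ^ 2 ≠ 1)
    (hrel : b' = c⁻¹ * b) :
    let R : Matrix (Fin 2) (Fin 2) ℂ := !![b⁻¹, 0; 0, b]
    let R' : Matrix (Fin 2) (Fin 2) ℂ := !![b'⁻¹, 0; 0, b']
    let U : ℂ → Matrix (Fin 2) (Fin 2) ℂ := fun y => !![1, 0; -b⁻¹ * y / (b'⁻¹ - b'), 1]
    let F : ℂ × (Fin n → Matrix (Fin 2) (Fin 2) ℂ) → (Fin (n + 1) → Matrix (Fin 2) (Fin 2) ℂ) :=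
      fun yA => Fin.snoc (fun j => (U yA.1)⁻¹ * yA.2 j * U yA.1) !![c, 0; yA.1, c⁻¹]
    Set.BijOn F
      {yA | (List.ofFn yA.2).prod * R' = 1}
      {A | (List.ofFn A).prod * R = 1 ∧ A (Fin.last n) 0 0 = c ∧
        A (Fin.last n) 0 1 = 0 ∧ A (Fin.last n) 1 1 = c⁻¹} := by
  intro R R' U F
  have hd : b'⁻¹ - b' ≠ 0 := by
    intro h
    have h1 : b'⁻¹ = b' := sub_eq_zero.mp h
    apply hb'2
    rw [sq]; nth_rewrite 1 [← h1]; exact inv_mul_cancel₀ hb'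
  set V : ℂ → Matrix (Fin 2) (Fin 2) ℂ := fun y => !![1, 0; b⁻¹ * y / (b'⁻¹ - b'), 1] with hV
  have hUV : ∀ y, U y * V y = 1 := by
    intro y
    show !![1, 0; -b⁻¹ * y / (b'⁻¹ - b'), 1] * !![1, 0; b⁻¹ * y / (b'⁻¹ - b'), 1] = 1
    ext i j
    fin_cases i <;> fin_cases j <;>
      simp [Matrix.mul_apply, Fin.sum_univ_two] <;> ring
  have hVU : ∀ y, V y * U y = 1 := by
    intro y
    show !![1, 0; b⁻¹ * y / (b'⁻¹ - b'), 1] * !![1, 0; -b⁻¹ * y / (b'⁻¹ - b'), 1] = 1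
    ext i j
    fin_cases i <;> fin_cases j <;>
      simp [Matrix.mul_apply, Fin.sum_univ_two] <;> ring
  have hUinv : ∀ y, (U y)⁻¹ = V y := fun y => Matrix.inv_eq_right_inv (hUV y)
  set K : Matrix (Fin 2) (Fin 2) ℂ := !![b', 0; 0, b'⁻¹] with hK
  have hKR' : K * R' = 1 := by
    show !![b', 0; 0, b'⁻¹] * !![b'⁻¹, 0; 0, b'] = 1
    ext i j
    fin_cases i <;> fin_cases j <;>
      simp [Matrix.mul_apply, Fin.sum_univ_two, mul_inv_cancel₀ hb', inv_mul_cancel₀ hb']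
  have hR'K : R' * K = 1 := mul_eq_one_comm.mp hKR'
  have hkey : ∀ y : ℂ, V y * K * U y * !![c, 0; y, c⁻¹] * R = 1 :=
    fun y => key_identity b b' c hb hb' hc hd hrel y
  constructor
  · -- MapsTo
    rintro ⟨y, A'⟩ hA'
    simp only [Set.mem_setOf_eq] at hA' ⊢
    have hP : (List.ofFn A').prod = K := by
      calc (List.ofFn A').prod = (List.ofFn A').prod * (R' * K) := by rw [hR'K, mul_one]
        _ = ((List.ofFn A').prod * R') * K := by rw [mul_assoc]
        _ = K := by rw [hA', one_mul]
    refine ⟨?_, ?_, ?_, ?_⟩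
    · show (List.ofFn (F (y, A'))).prod * R = 1
      simp only [F]
      rw [List.ofFn_succ', List.prod_concat]
      simp only [Fin.snoc_castSucc, Fin.snoc_last]
      rw [prod_conj_aux (U y) ((U y)⁻¹) (by rw [hUinv]; exact hVU y)
        (by rw [hUinv]; exact hUV y), hP, hUinv]
      exact hkey y
    · show (F (y, A')) (Fin.last n) 0 0 = c
      simp [F]
    · show (F (y, A')) (Fin.last n) 0 1 = 0
      simp [F]
    · show (F (y, A')) (Fin.last n) 1 1 = c⁻¹
      simp [F]
  constructor
  · -- InjOn
    rintro ⟨y, A'⟩ _ ⟨z, B'⟩ _ h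
    have hy : y = z := by
      have h0 := congrFun h (Fin.last n)
      simp only [F, Fin.snoc_last] at h0
      have h1 := congrFun (congrFun h0 1) 0
      simpa using h1
    subst hy
    have hAB : A' = B' := by
      funext j
      have h0 := congrFun h (Fin.castSucc j)
      simp only [F, Fin.snoc_castSucc] at h0
      have h2 : U y * ((U y)⁻¹ * A' j * U y) * V y = U y * ((U y)⁻¹ * B' j * U y) * V y := by
        rw [h0]
      rw [hUinv] at h2
      calc A' j = (U y * V y) * A' j * (U y * V y) := by rw [hUV]; simp
        _ = U y * (V y * A' j * U y) * V y := by noncomm_ring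
        _ = U y * (V y * B' j * U y) * V y := h2
        _ = (U y * V y) * B' j * (U y * V y) := by noncomm_ring
        _ = B' j := by rw [hUV]; simp
    rw [hAB]
  · -- SurjOn
    rintro A ⟨hprod, h2, h3, h4⟩
    set y : ℂ := A (Fin.last n) 1 0 with hy
    have hL : A (Fin.last n) = !![c, 0; y, c⁻¹] := by
      ext i j
      fin_cases i <;> fin_cases j <;> simp [h2, h3, h4, hy]
    refine ⟨(y, fun j => U y * A (Fin.castSucc j) * V y), ?_, ?_⟩
    · -- membership in source set
      simp only [Set.mem_setOf_eq]
      rw [prod_conj_aux (V y) (U y) (hUV y) (hVU y)]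
      set Q := (List.ofFn fun j => A (Fin.castSucc j)).prod with hQ
      have hQL : Q * (!![c, 0; y, c⁻¹] * R) = 1 := by
        rw [List.ofFn_succ', List.prod_concat] at hprod
        rw [hL, mul_assoc] at hprod
        exact hprod
      have hQ' : Q = V y * K * U y := by
        have hLQ : (!![c, 0; y, c⁻¹] * R) * Q = 1 := mul_eq_one_comm.mp hQL
        calc Q = 1 * Q := by rw [one_mul]
          _ = (V y * K * U y * (!![c, 0; y, c⁻¹] * R)) * Q := by
              rw [show V y * K * U y * (!![c, 0; y, c⁻¹] * R) = 1 from by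
                rw [← mul_assoc]; exact hkey y]
          _ = V y * K * U y * ((!![c, 0; y, c⁻¹] * R) * Q) := by
              rw [mul_assoc]
          _ = V y * K * U y := by rw [hLQ, mul_one]
      rw [hQ']
      calc U y * (V y * K * U y) * V y * R'
          = (U y * V y) * K * (U y * V y) * R' := by noncomm_ring
        _ = K * R' := by rw [hUV]; simp
        _ = 1 := hKR'
    · -- F applied gives A
      funext i
      refine Fin.lastCases ?_ ?_ i
      · simp only [F, Fin.snoc_last]
        exact hL.symm
      · intro j
        simp only [F, Fin.snoc_castSucc, hUinv]
        calc V y * (U y * A (Fin.castSucc j) * V y) * U y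
            = (V y * U y) * A (Fin.castSucc j) * (V y * U y) := by noncomm_ring
          _ = A (Fin.castSucc j) := by rw [hVU]; simp
end

section
/- Let c₁,…,c_k ∈ ℂ* satisfy: for all signs ε ∈ {±1}^k, ∏ c_i^{ε_i} ∉ {1, −1} (very generic condition). Let 1 < i < k. Fix b, b' ∈ ℂ* with b' = c_i^{−δ} b^{δ'} for some δ, δ' ∈ {±1} (eigenvalue compatibility from a rank-one subsystem on the i-th pair of pants). If the sequences (c₁,…,c_{i−1}, b') and (b, c_{i+1},…,c_k) are both Kostov-nongeneric (i.e., each admits a sign choice making the product of powers equal 1), then combining these relations with the compatibility relation produces signs η ∈ {±1}^k with ∏ c_j^{η_j} = 1, contradicting the very generic hypothesis. Hence at least one of the two partial sequences is Kostov-generic. -/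
lemma sign_mul_sign {a b : ℤ} (ha : a = 1 ∨ a = -1) (hb : b = 1 ∨ b = -1) :
    a * b = 1 ∨ a * b = -1 := by
  rcases ha with h | h <;> rcases hb with h' | h' <;> simp [h, h']

/-- If (c₁,…,c_k) is very generic (no signed product equals 1 or −1) and
b' = c_i^{−δ}·b^{δ'} is the eigenvalue compatibility coming from a rank-one
subsystem on the i-th pair of pants, then the two partial sequences
(c₁,…,c_{i−1}, b') and (b, c_{i+1},…,c_k) cannot both be Kostov-nongeneric;
i.e., at least one of them is Kostov-generic. -/
theorem one_side_kostov_generic (k : ℕ) (c : Fin k → ℂ) (hc0 : ∀ j, c j ≠ 0)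
    (hvg : ∀ ε : Fin k → ℤ, (∀ j, ε j = 1 ∨ ε j = -1) →
      (∏ j, c j ^ ε j) ≠ 1 ∧ (∏ j, c j ^ ε j) ≠ -1)
    (i : Fin k) (b b' : ℂ) (hb : b ≠ 0) (hb' : b' ≠ 0)
    (δ δ' : ℤ) (hδ : δ = 1 ∨ δ = -1) (hδ' : δ' = 1 ∨ δ' = -1)
    (hcompat : b' = c i ^ (-δ) * b ^ δ') :
    ¬ (∃ (ε : Fin k → ℤ) (e : ℤ), (∀ j, ε j = 1 ∨ ε j = -1) ∧ (e = 1 ∨ e = -1) ∧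
        (∏ j ∈ Finset.univ.filter (· < i), c j ^ ε j) * b' ^ e = 1) ∨
    ¬ (∃ (ε : Fin k → ℤ) (e : ℤ), (∀ j, ε j = 1 ∨ ε j = -1) ∧ (e = 1 ∨ e = -1) ∧
        b ^ e * (∏ j ∈ Finset.univ.filter (i < ·), c j ^ ε j) = 1) := by
  by_contra h
  push_neg at h
  obtain ⟨⟨ε₁, e₁, hε₁, he₁, heq₁⟩, ε₂, e₂, hε₂, he₂, heq₂⟩ := h
  set m : ℤ := -e₂ * δ' * e₁ with hm
  have hmsign : m = 1 ∨ m = -1 := by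
    apply sign_mul_sign _ he₁
    apply sign_mul_sign _ hδ'
    rcases he₂ with h | h <;> simp [h]
  set η : Fin k → ℤ := fun j => if j < i then ε₁ j else if i < j then m * ε₂ j else -δ * e₁
    with hη
  have hsigns : ∀ j, η j = 1 ∨ η j = -1 := by
    intro j
    simp only [hη]
    split_ifs
    · exact hε₁ j
    · exact sign_mul_sign hmsign (hε₂ j)
    · apply sign_mul_sign _ he₁
      rcases hδ with h | h <;> simp [h]
  refine (hvg η hsigns).1 ?_
  have hfilt : Finset.univ.filter (fun j => ¬ j < i) =
      insert i (Finset.univ.filter (i < ·)) := by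
    ext j
    simp only [Finset.mem_filter, Finset.mem_insert, Finset.mem_univ, true_and]
    constructor
    · intro hj
      rcases lt_or_eq_of_le (not_lt.mp hj) with h' | h'
      · exact Or.inr h'
      · exact Or.inl h'.symm
    · rintro (rfl | hj)
      · exact lt_irrefl _
      · exact not_lt.mpr hj.le
  have hnotmem : i ∉ Finset.univ.filter (i < ·) := by simp
  have key := Finset.prod_filter_mul_prod_filter_not Finset.univ (· < i)
    (fun j => c j ^ η j)
  rw [← key, hfilt, Finset.prod_insert hnotmem]
  have h₁ : ∏ j ∈ Finset.univ.filter (· < i), c j ^ η j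
      = ∏ j ∈ Finset.univ.filter (· < i), c j ^ ε₁ j := by
    apply Finset.prod_congr rfl
    intro j hj
    simp only [Finset.mem_filter] at hj
    simp [hη, hj.2]
  have h₂ : ∏ j ∈ Finset.univ.filter (i < ·), c j ^ η j
      = (∏ j ∈ Finset.univ.filter (i < ·), c j ^ ε₂ j) ^ m := by
    rw [← Finset.prod_zpow]
    apply Finset.prod_congr rfl
    intro j hj
    simp only [Finset.mem_filter] at hj
    have : ¬ j < i := not_lt.mpr hj.2.le
    simp only [hη, this, hj.2, if_true, if_false]
    rw [mul_comm, zpow_mul]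
  have hηi : η i = -δ * e₁ := by simp [hη]
  have hP2 : (∏ j ∈ Finset.univ.filter (i < ·), c j ^ ε₂ j) = b ^ (-e₂) := by
    rw [zpow_neg]
    exact eq_inv_of_mul_eq_one_right heq₂
  have he₂sq : e₂ * e₂ = 1 := by rcases he₂ with h | h <;> simp [h]
  rw [h₁, h₂, hηi, hP2, ← zpow_mul]
  have hexp : -e₂ * m = δ' * e₁ := by
    have : -e₂ * m = e₂ * e₂ * (δ' * e₁) := by rw [hm]; ring
    rw [this, he₂sq, one_mul]
  rw [hexp]
  have hb' : b' ^ e₁ = c i ^ (-δ * e₁) * b ^ (δ' * e₁) := by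
    rw [hcompat, mul_zpow, ← zpow_mul, ← zpow_mul]
  calc (∏ j ∈ Finset.univ.filter (· < i), c j ^ ε₁ j) *
        (c i ^ (-δ * e₁) * b ^ (δ' * e₁))
      = (∏ j ∈ Finset.univ.filter (· < i), c j ^ ε₁ j) * b' ^ e₁ := by rw [hb']
    _ = 1 := heq₁
end
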